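/- arXiv:2012.01216 — 2 statements merged into one kernel-verified Lean document; each statement's English description precedes it below -/
import Mathlib

section
/- (Theorem 4: a minimizer of Δ is indivisible.) Let ι be an index type, V : ι → Finset (ℝ²) assign nonempty finite vertex sets, and S a nonempty finset of indices. Suppose (i) for every finset S′ ⊆ S one has Δ(S) ≤ Δ(S′), and (ii) there exists P ∈ S such that for every finset S′ ⊆ S \ {P} one has 0 ≤ Δ(S′). Then S is indivisible: for every finpartition π of S, H(S) ≤ Σ_{b ∈ π.parts} H(b). -/
open MeasureTheory

/-- The perimeter of a set in the Euclidean plane: the one-dimensional Hausdorff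
measure of its topological frontier. -/
noncomputable def perim (s : Set (EuclideanSpace ℝ (Fin 2))) : ℝ :=
  (μH[1] (frontier s)).toReal

/-- `hullPerim V F`: the perimeter of the convex hull of the union of the convex
polygons (given by their vertex sets `V i`) indexed by the finset `F`. -/
noncomputable def hullPerim {ι : Type*} (V : ι → Finset (EuclideanSpace ℝ (Fin 2)))
    (F : Finset ι) : ℝ :=
  perim (convexHull ℝ (⋃ i ∈ F, (V i : Set (EuclideanSpace ℝ (Fin 2)))))

/-- `delta V F = H(F) - ∑_{i ∈ F} H({i})`: the change in total perimeter caused by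
merging the polygons indexed by `F` into a single convex hull. -/
noncomputable def delta {ι : Type*} (V : ι → Finset (EuclideanSpace ℝ (Fin 2)))
    (F : Finset ι) : ℝ :=
  hullPerim V F - ∑ i ∈ F, hullPerim V {i}

theorem indivisible_of_delta_min {ι : Type*} [DecidableEq ι]
    (V : ι → Finset (EuclideanSpace ℝ (Fin 2))) (hV : ∀ i, (V i).Nonempty)
    (S : Finset ι) (hS : S.Nonempty)
    (hmin : ∀ S' ⊆ S, delta V S ≤ delta V S')
    (hP : ∃ P ∈ S, ∀ S' ⊆ S \ {P}, 0 ≤ delta V S') :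
    ∀ π : Finpartition S, hullPerim V S ≤ ∑ b ∈ π.parts, hullPerim V b := by
  intro π
  obtain ⟨P, hPS, hP0⟩ := hP
  obtain ⟨b₀, hb₀, hPb₀⟩ := π.exists_mem hPS
  have key : ∀ b ∈ π.parts.erase b₀, ∑ i ∈ b, hullPerim V {i} ≤ hullPerim V b := by
    intro b hb
    have hbp := Finset.mem_of_mem_erase hb
    have hne := Finset.ne_of_mem_erase hb
    have hsub : b ⊆ S \ {P} := by
      intro x hx
      simp only [Finset.mem_sdiff, Finset.mem_singleton]
      refine ⟨π.le hbp hx, ?_⟩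
      rintro rfl
      exact hne (π.eq_of_mem_parts hbp hb₀ hx hPb₀)
    have := hP0 b hsub
    simp only [delta] at this
    linarith
  have hmin' := hmin b₀ (π.le hb₀)
  simp only [delta] at hmin'
  have sum_split : ∑ i ∈ S, hullPerim V {i}
      = ∑ b ∈ π.parts, ∑ i ∈ b, hullPerim V {i} := by
    conv_lhs => rw [← π.biUnion_parts]
    rw [Finset.sum_biUnion π.supIndep.pairwiseDisjoint]; rfl
  have h1 : ∑ b ∈ π.parts, ∑ i ∈ b, hullPerim V {i}
      = ∑ i ∈ b₀, hullPerim V {i} + ∑ b ∈ π.parts.erase b₀, ∑ i ∈ b, hullPerim V {i} :=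
    (Finset.add_sum_erase _ _ hb₀).symm
  have h2 : ∑ b ∈ π.parts, hullPerim V b
      = hullPerim V b₀ + ∑ b ∈ π.parts.erase b₀, hullPerim V b :=
    (Finset.add_sum_erase _ _ hb₀).symm
  have h3 : ∑ b ∈ π.parts.erase b₀, ∑ i ∈ b, hullPerim V {i}
      ≤ ∑ b ∈ π.parts.erase b₀, hullPerim V b :=
    Finset.sum_le_sum key
  linarith
end

section
/- (Monotonicity of perimeter for convex bodies.) If A ⊆ B are nonempty compact convex subsets of ℝ², then μH¹(frontier A) ≤ μH¹(frontier B): the perimeter of a convex body contained in another convex body is at most the perimeter of the containing body. -/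
/-!
The nearest-point projection `P` onto a closed convex set `A` is 1-Lipschitz, so it does not
increase Hausdorff measure. If moreover `A ⊆ C` with `C` compact, then `P` maps `frontier C` onto
a set containing `frontier A`: for `y ∉ A` the whole ray from `P y` through `y` projects to `P y`,
and this ray leaves `C` through its frontier; every frontier point of `A` is a limit of such
points `P y`, and `P '' frontier C` is compact. Applied once more with `C` a disc, whose boundary
circle is a Lipschitz image of an interval, this also shows that `μH¹(frontier B)` is finite,
which is needed to compare the real-valued perimeters.
-/

open MeasureTheory

open Metric Set Bornology
open scoped RealInnerProductSpace ENNReal Real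

theorem IsPreconnected.inter_frontier_nonempty {X : Type*} [TopologicalSpace X] {s t : Set X}
    (hs : IsPreconnected s) (hst : (s ∩ t).Nonempty) (hst' : (s \ t).Nonempty) :
    (s ∩ frontier t).Nonempty := by
  rw [frontier_eq_closure_inter_closure]
  exact isPreconnected_closed_iff.1 hs _ _ isClosed_closure isClosed_closure
    (fun x _ => (em (x ∈ t)).imp (subset_closure ·) (subset_closure ·))
    (hst.mono (inter_subset_inter_right _ subset_closure))
    (hst'.mono (inter_subset_inter_right _ subset_closure))

theorem Bornology.IsBounded.exists_add_smul_mem_frontier {E : Type*} [NormedAddCommGroup E]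
    [NormedSpace ℝ E] {C : Set E} (hC : IsBounded C) {p v : E} (hp : p ∈ C) (hv : v ≠ 0) :
    ∃ t : ℝ, 0 ≤ t ∧ p + t • v ∈ frontier C := by
  obtain ⟨R, hR, hCR⟩ := hC.subset_closedBall_lt 0 p
  have hray : IsPreconnected ((fun t : ℝ => p + t • v) '' Ici 0) :=
    isPreconnected_Ici.image _ (by fun_prop : Continuous fun t : ℝ => p + t • v).continuousOn
  have hT : 0 ≤ 2 * R / ‖v‖ := div_nonneg (by linarith) (norm_nonneg v)
  have hfar : p + (2 * R / ‖v‖) • v ∉ C := fun h => by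
    have := hCR h
    rw [mem_closedBall, dist_self_add_left, norm_smul, Real.norm_of_nonneg hT,
      div_mul_cancel₀ _ (norm_ne_zero_iff.2 hv)] at this
    linarith
  obtain ⟨_, ⟨⟨t, ht, rfl⟩, hfr⟩⟩ := hray.inter_frontier_nonempty
    ⟨p, ⟨0, mem_Ici.2 le_rfl, by simp⟩, hp⟩ ⟨_, ⟨_, hT, rfl⟩, hfar⟩
  exact ⟨t, ht, hfr⟩

section MetricProjection

variable {F : Type*} [NormedAddCommGroup F] [InnerProductSpace ℝ F]

/-- The variational inequality characterising `y` as the point of `K` nearest to `x` when `K` is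
convex (`norm_eq_iInf_iff_real_inner_le_zero`). -/
def IsMetricProj (K : Set F) (x y : F) : Prop :=
  y ∈ K ∧ ∀ z ∈ K, ⟪x - y, z - y⟫ ≤ 0

theorem exists_isMetricProj {K : Set F} (hne : K.Nonempty) (hK : IsComplete K)
    (hconv : Convex ℝ K) (x : F) : ∃ y, IsMetricProj K x y := by
  obtain ⟨y, hyK, hy⟩ := exists_norm_eq_iInf_of_complete_convex hne hK hconv x
  exact ⟨y, hyK, (norm_eq_iInf_iff_real_inner_le_zero hconv hyK).1 hy⟩

namespace IsMetricProj

variable {K : Set F} {x x' y y' : F}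

theorem self (hx : x ∈ K) : IsMetricProj K x x :=
  ⟨hx, fun z _ => by simp⟩

theorem dist_le (h : IsMetricProj K x y) (h' : IsMetricProj K x' y') : dist y y' ≤ dist x x' := by
  have key : ‖y - y'‖ ^ 2 ≤ ‖x - x'‖ * ‖y - y'‖ := calc
    ‖y - y'‖ ^ 2 ≤ ‖y - y'‖ ^ 2 - ⟪x - y, y' - y⟫ - ⟪x' - y', y - y'⟫ := by
      linarith [h.2 y' h'.1, h'.2 y h.1]
    _ = ⟪x - x', y - y'⟫ := by
      rw [← real_inner_self_eq_norm_sq]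
      simp only [inner_sub_left, inner_sub_right, real_inner_comm]
      ring
    _ ≤ ‖x - x'‖ * ‖y - y'‖ := real_inner_le_norm _ _
  rw [dist_eq_norm, dist_eq_norm]
  nlinarith [norm_nonneg (x - x'), norm_nonneg (y - y')]

theorem unique (h : IsMetricProj K x y) (h' : IsMetricProj K x y') : y = y' :=
  dist_le_zero.1 (by simpa using h.dist_le h')

theorem add_smul_sub (h : IsMetricProj K x y) {t : ℝ} (ht : 0 ≤ t) :
    IsMetricProj K (y + t • (x - y)) y :=
  ⟨h.1, fun z hz => by
    rw [add_sub_cancel_left, real_inner_smul_left]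
    exact mul_nonpos_of_nonneg_of_nonpos ht (h.2 z hz)⟩

end IsMetricProj

theorem lipschitzWith_one_of_isMetricProj {K : Set F} {P : F → F}
    (hP : ∀ x, IsMetricProj K x (P x)) : LipschitzWith 1 P :=
  LipschitzWith.mk_one fun x x' => (hP x).dist_le (hP x')

theorem frontier_subset_image_frontier_of_isMetricProj {A C : Set F} (hA : IsClosed A)
    (hC : IsCompact C) (hAC : A ⊆ C) {P : F → F} (hP : ∀ x, IsMetricProj A x (P x)) :
    frontier A ⊆ P '' frontier C := by
  have hPcont : Continuous P := (lipschitzWith_one_of_isMetricProj hP).continuous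
  have hcompl : P '' Aᶜ ⊆ P '' frontier C := by
    rintro _ ⟨y, hy, rfl⟩
    have hv : y - P y ≠ 0 := sub_ne_zero.2 fun h => hy (h ▸ (hP y).1)
    obtain ⟨t, ht, hfr⟩ := hC.isBounded.exists_add_smul_mem_frontier (hAC (hP y).1) hv
    exact ⟨_, hfr, (hP _).unique ((hP y).add_smul_sub ht)⟩
  have hfrC : IsClosed (P '' frontier C) :=
    ((hC.of_isClosed_subset isClosed_frontier
      (hC.isClosed.frontier_subset)).image hPcont).isClosed
  intro x hx
  have hPx : P x = x := (hP x).unique (.self (hA.frontier_subset hx))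
  have hclosure : P '' closure Aᶜ ⊆ P '' frontier C :=
    (image_closure_subset_closure_image hPcont).trans (closure_minimal hcompl hfrC)
  exact hPx ▸ hclosure (mem_image_of_mem P (frontier_subset_closure (by rwa [frontier_compl])))

theorem hausdorffMeasure_frontier_le_of_convex [MeasurableSpace F] [BorelSpace F] {d : ℝ}
    (hd : 0 ≤ d) {A C : Set F} (hAne : A.Nonempty) (hA : IsClosed A) (hAconv : Convex ℝ A)
    (hC : IsCompact C) (hAC : A ⊆ C) : μH[d] (frontier A) ≤ μH[d] (frontier C) := by
  choose P hP using exists_isMetricProj hAne (hC.of_isClosed_subset hA hAC).isComplete hAconv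
  calc μH[d] (frontier A) ≤ μH[d] (P '' frontier C) :=
        measure_mono (frontier_subset_image_frontier_of_isMetricProj hA hC hAC hP)
    _ ≤ μH[d] (frontier C) := by
        simpa using (lipschitzWith_one_of_isMetricProj hP).hausdorffMeasure_image_le hd _

end MetricProjection

theorem hausdorffMeasure_sphere_lt_top {r : ℝ} (hr : 0 ≤ r) :
    μH[1] (sphere (0 : EuclideanSpace ℝ (Fin 2)) r) < ∞ := by
  let e := Complex.orthonormalBasisOneI.repr
  have hsphere :
      sphere (0 : EuclideanSpace ℝ (Fin 2)) r = (e ∘ circleMap 0 r) '' Ioc 0 (2 * π) := by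
    rw [image_comp, image_circleMap_Ioc, abs_of_nonneg hr, e.image_sphere, map_zero]
  have hlip : LipschitzWith (Real.nnabs r) (e ∘ circleMap 0 r) := by
    simpa using e.lipschitz.comp (lipschitzWith_circleMap 0 r)
  rw [hsphere]
  refine (hlip.hausdorffMeasure_image_le zero_le_one _).trans_lt ?_
  rw [hausdorffMeasure_real]
  exact ENNReal.mul_lt_top (by simp) measure_Ioc_lt_top

theorem perim_mono_of_convex
    (A B : Set (EuclideanSpace ℝ (Fin 2)))
    (hAne : A.Nonempty) (hBne : B.Nonempty)
    (hAcpt : IsCompact A) (hBcpt : IsCompact B)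
    (hAconv : Convex ℝ A) (hBconv : Convex ℝ B)
    (hAB : A ⊆ B) :
    perim A ≤ perim B := by
  obtain ⟨r, hr, hBr⟩ := hBcpt.isBounded.subset_closedBall_lt 0 0
  have hAB' : μH[1] (frontier A) ≤ μH[1] (frontier B) :=
    hausdorffMeasure_frontier_le_of_convex zero_le_one hAne hAcpt.isClosed hAconv hBcpt hAB
  have hB_lt_top : μH[1] (frontier B) < ∞ := by
    refine lt_of_le_of_lt ?_ (hausdorffMeasure_sphere_lt_top hr.le)
    simpa only [frontier_closedBall'] using hausdorffMeasure_frontier_le_of_convex zero_le_one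
      hBne hBcpt.isClosed hBconv (isCompact_closedBall 0 r) hBr
  exact ENNReal.toReal_mono hB_lt_top.ne hAB'
end
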